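/- Let G be a semi-Markovian DAG satisfying Assumption 1 in which every parent of t is observed, i.e., pa(t) ⊆ X^(o). Then a set Z ⊆ X^(o) satisfies the back-door criterion relative to (t, y) in G if and only if either (a) pa(t) ⊆ Z, or (b) there exists x_t ∈ pa(t) with x_t ∉ Z such that, in the sub-sampled graph G_e built from x_t and some subset V_0 ⊆ {t}, e and y are d-separated by Z ∪ {t}. -/

import Mathlib

namespace CausalDAG

variable {V : Type*}

/-- Adjacency: an edge between `u` and `v` in either direction. -/
def Adj (E : V → V → Prop) (u v : V) : Prop := E u v ∨ E v u

/-- `d` is a descendant of `v`: there is a directed path from `v` to `d`. -/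
def Descendant (E : V → V → Prop) (v d : V) : Prop := Relation.TransGen E v d

/-- The directed graph with edge relation `E` is acyclic. -/
def Acyclic (E : V → V → Prop) : Prop := ∀ v, ¬ Relation.TransGen E v v

/-- A path between `a` and `b` in the graph with edge relation `E`:
a sequence of at least two distinct nodes, starting at `a`, ending at `b`,
with consecutive nodes joined by an edge (in either direction). -/
structure GPath (E : V → V → Prop) (a b : V) where
  nodes : List V
  nodup : nodes.Nodup
  two_le : 2 ≤ nodes.length
  head_eq : nodes.head? = some a
  last_eq : nodes.getLast? = some b
  chain : nodes.Chain' (Adj E)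

namespace GPath

variable {E : V → V → Prop} {a b : V}

/-- `i` is an interior position of the path. -/
def Interior (p : GPath E a b) (i : ℕ) : Prop := 0 < i ∧ i + 1 < p.nodes.length

/-- The node at interior position `i` is a collider on the path: both adjacent
edges of the path point into it. -/
def ColliderAt (p : GPath E a b) (i : ℕ) : Prop :=
  ∃ x v z, p.nodes[(i - 1)]? = some x ∧ p.nodes[i]? = some v ∧
    p.nodes[(i + 1)]? = some z ∧ E x v ∧ E z v

/-- The path is blocked by the set `S`. -/
def BlockedBy (p : GPath E a b) (S : Set V) : Prop :=
  ∃ i v, p.Interior i ∧ p.nodes[i]? = some v ∧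
    ((¬ p.ColliderAt i ∧ v ∈ S) ∨
      (p.ColliderAt i ∧ v ∉ S ∧ ∀ d, Descendant E v d → d ∉ S))

/-- The path contains the directed edge `u → v` as one of its steps. -/
def UsesEdge (p : GPath E a b) (u v : V) : Prop :=
  E u v ∧ ∃ i, (p.nodes[i]? = some u ∧ p.nodes[(i + 1)]? = some v) ∨
    (p.nodes[i]? = some v ∧ p.nodes[(i + 1)]? = some u)

/-- The path contains an edge pointing into its first endpoint. -/
def IntoFirst (p : GPath E a b) : Prop :=
  ∃ w, p.nodes[1]? = some w ∧ E w a

end GPath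

/-- `a` and `b` are d-separated by `S`: every path between them is blocked by `S`. -/
def DSep (E : V → V → Prop) (a b : V) (S : Set V) : Prop :=
  ∀ p : GPath E a b, p.BlockedBy S

/-- `Z` satisfies the back-door criterion relative to `(t, y)`: no node of `Z` is a
descendant of `t`, and `Z` blocks every path between `t` and `y` containing an edge
pointing into `t`. -/
def BackDoor (E : V → V → Prop) (t y : V) (Z : Set V) : Prop :=
  (∀ z ∈ Z, ¬ Descendant E t z) ∧
  ∀ p : GPath E t y, p.IntoFirst → p.BlockedBy Z

/-- A semi-Markovian DAG: observed features `Xo`, unobserved features `Xu`,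
treatment `t`, outcome `y`; unobserved nodes have no parents and at most two
children. -/
structure SemiMarkov (V : Type*) where
  E : V → V → Prop
  Xo : Set V
  Xu : Set V
  t : V
  y : V
  acyclic : Acyclic E
  t_ne_y : t ≠ y
  t_notin : t ∉ Xo ∪ Xu
  y_notin : y ∉ Xo ∪ Xu
  disjoint : Disjoint Xo Xu
  cover : ∀ v, v ∈ Xo ∨ v ∈ Xu ∨ v = t ∨ v = y
  unobs_no_parents : ∀ u ∈ Xu, ∀ w, ¬ E w u
  unobs_children : ∀ u ∈ Xu, ∃ a b, ∀ c, E u c → c = a ∨ c = b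

/-- Assumption 1: `y` is the only child of `t`, and `y` has no children. -/
def Assumption1 (M : SemiMarkov V) : Prop :=
  M.E M.t M.y ∧ (∀ w, M.E M.t w → w = M.y) ∧ ∀ w, ¬ M.E M.y w

/-- Edge relation of the sub-sampled graph `G_e`: a new node `e` (represented by
`none`) is added, together with the edge `x_t → e` and an edge `v → e` for each
`v ∈ V0`. -/
def subEdge (E : V → V → Prop) (xt : V) (V0 : Set V) :
    Option V → Option V → Prop
  | some u, some v => E u v
  | some u, none => u = xt ∨ u ∈ V0
  | none, _ => False

end CausalDAG

/-!
The descendant clause of the back-door criterion is automatic, since the only descendant of `t`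
is `y`. A back-door path `t ← w ⋯ y` with `w ∉ Z` becomes, in the sub-sampled graph, the path
`e ← x_t ⋯ y` cut out of it if it passes through `x_t`, and `e ← x_t → t ← w ⋯ y` otherwise; there
`t` is a collider in the conditioning set, so any triple blocking it for `Z ∪ {t}` lies on the
original path with a middle node other than `t`, and blocks it for `Z`.

Conversely, with `V₀ = ∅` the paths from `e` are `e ← x_t` followed by a path from the parent `x_t`
to `y`, so it suffices that `Z ∪ {t}` blocks every path `π` from a parent `c ∉ Z` of `t` to `y`.
Compared with `Z`, conditioning on `t` only opens colliders that are ancestors of `t` with no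
descendant in `Z`. If `π` were open, comparing it with a back-door path through `t` (a suffix of
`π`, or `π` preceded by `t`) exhibits such a collider `v` on `π`. Let `w` be the last node of `π`
after `v` that lies on a directed path from `v` to `t`: walking back from a parent of `t` to `w`
along such a path and then following `π` gives a path with fewer colliders, which by induction is
blocked, and its blocking triple already lies on `π`.
-/

namespace CausalDAG

open List Relation

section Lists

variable {α β : Type*} {P Q : α → α → α → Prop} {l l' : List α}

theorem exists_eq_append_cons_of_last {p : α → Prop} (h : ∃ u ∈ l, p u) :
    ∃ l₁ w l₂, l = l₁ ++ w :: l₂ ∧ p w ∧ ∀ u ∈ l₂, ¬ p u := by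
  induction l with
  | nil => simp at h
  | cons a l ih =>
    by_cases hl : ∃ u ∈ l, p u
    · obtain ⟨l₁, w, l₂, rfl, hw, hl₂⟩ := ih hl
      exact ⟨a :: l₁, w, l₂, rfl, hw, hl₂⟩
    · obtain ⟨u, hu, hpu⟩ := h
      rcases mem_cons.1 hu with rfl | hu
      · exact ⟨[], u, l, rfl, hpu, fun u hu hpu => hl ⟨u, hu, hpu⟩⟩
      · exact absurd ⟨u, hu, hpu⟩ hl

theorem exists_eq_map_some {l : List (Option α)} (h : none ∉ l) :
    ∃ L : List α, l = L.map some := by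
  induction l with
  | nil => exact ⟨[], rfl⟩
  | cons o l ih =>
    obtain ⟨L, rfl⟩ := ih fun h' => h (mem_cons_of_mem _ h')
    obtain ⟨a, rfl⟩ := Option.ne_none_iff_exists'.1 fun ho => h (ho ▸ mem_cons_self)
    exact ⟨a :: L, rfl⟩

theorem triple_infix_iff_getElem? {x v z : α} :
    [x, v, z] <:+: l ↔ ∃ i, l[i]? = some x ∧ l[i + 1]? = some v ∧ l[i + 2]? = some z := by
  rw [infix_iff_getElem?]
  constructor
  · rintro ⟨k, -, h⟩
    exact ⟨k, by simpa using h 0 (by simp), by simpa [add_comm] using h 1 (by simp),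
      by simpa [add_comm] using h 2 (by simp)⟩
  · rintro ⟨i, hx, hv, hz⟩
    refine ⟨i, ?_, fun j hj => ?_⟩
    · have := (List.getElem?_eq_some_iff.1 hz).1
      simp only [length_cons, length_nil]
      omega
    · simp only [length_cons, length_nil] at hj
      interval_cases j <;> simpa [add_comm]

theorem ne_head_of_triple_infix {x v z a : α} (h : [x, v, z] <:+: a :: l)
    (hnd : (a :: l).Nodup) : v ≠ a := by
  rintro rfl
  rcases infix_cons_iff.1 h with hpre | hin
  · obtain ⟨rfl, hpre⟩ := cons_prefix_cons.1 hpre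
    exact (nodup_cons.1 hnd).1 (hpre.subset (by simp))
  · exact (nodup_cons.1 hnd).1 (hin.subset (by simp))

def HasTriple (P : α → α → α → Prop) (l : List α) : Prop :=
  ∃ x v z, [x, v, z] <:+: l ∧ P x v z

theorem HasTriple.of_infix (h : HasTriple P l) (hl : l <:+: l') : HasTriple P l' :=
  let ⟨x, v, z, hxvz, hP⟩ := h
  ⟨x, v, z, hxvz.trans hl, hP⟩

theorem HasTriple.mono (h : HasTriple P l)
    (hPQ : ∀ x v z, [x, v, z] <:+: l → P x v z → Q x v z) : HasTriple Q l :=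
  let ⟨x, v, z, hxvz, hP⟩ := h
  ⟨x, v, z, hxvz, hPQ x v z hxvz hP⟩

theorem HasTriple.of_cons_cons {a b : α} (h : HasTriple P (a :: b :: l))
    (hab : ∀ z ∈ l.head?, ¬ P a b z) : HasTriple P (b :: l) := by
  obtain ⟨x, v, z, hxvz, hP⟩ := h
  rcases infix_cons_iff.1 hxvz with hpre | hin
  · obtain ⟨rfl, rfl, l'', rfl⟩ : x = a ∧ v = b ∧ [z] <+: l := by simpa using hpre
    exact absurd hP (hab z (by simp))
  · exact ⟨x, v, z, hin, hP⟩

theorem hasTriple_cons_cons_cons {a b c : α} (h : P a b c) : HasTriple P (a :: b :: c :: l) :=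
  ⟨a, b, c, (prefix_append [a, b, c] l).isInfix, h⟩

theorem hasTriple_map_iff {f : β → α} {l : List β} :
    HasTriple P (l.map f) ↔ HasTriple (fun x v z => P (f x) (f v) (f z)) l := by
  simp only [HasTriple, infix_map_iff]
  constructor
  · rintro ⟨x, v, z, ⟨l', hl', hmap⟩, hP⟩
    obtain ⟨a, b, c, rfl, rfl, rfl, rfl⟩ :
        ∃ a b c, l' = [a, b, c] ∧ x = f a ∧ v = f b ∧ z = f c := by
      simpa [map_eq_cons_iff, eq_comm] using hmap
    exact ⟨a, b, c, hl', hP⟩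
  · rintro ⟨a, b, c, hl, hP⟩
    exact ⟨f a, f b, f c, ⟨[a, b, c], hl, rfl⟩, hP⟩

end Lists

section Colliders

variable {V : Type*} {E : V → V → Prop}

open scoped Classical in
noncomputable def colliderCount (E : V → V → Prop) : List V → ℕ
  | x :: v :: z :: l => (if E x v ∧ E z v then 1 else 0) + colliderCount E (v :: z :: l)
  | _ => 0

theorem colliderCount_cons_cons_cons {x v z : V} (hx : E x v) (hz : E z v) (l : List V) :
    colliderCount E (x :: v :: z :: l) = colliderCount E (v :: z :: l) + 1 := by
  rw [colliderCount, if_pos ⟨hx, hz⟩, add_comm]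

theorem colliderCount_cons_cons_of_not_rel {a b : V} (hab : ¬ E a b) (l : List V) :
    colliderCount E (a :: b :: l) = colliderCount E (b :: l) := by
  rcases l with _ | ⟨c, l⟩
  · simp [colliderCount]
  · rw [colliderCount, if_neg fun h => hab h.1, zero_add]

theorem colliderCount_le_cons (a : V) (l : List V) :
    colliderCount E l ≤ colliderCount E (a :: l) := by
  rcases l with _ | ⟨b, _ | ⟨c, l⟩⟩
  · simp [colliderCount]
  · simp [colliderCount]
  · rw [colliderCount]
    omega

theorem colliderCount_le_of_suffix {l l' : List V} (h : l <:+ l') :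
    colliderCount E l ≤ colliderCount E l' := by
  obtain ⟨s, rfl⟩ := h
  induction s with
  | nil => rfl
  | cons a s ih => exact ih.trans (colliderCount_le_cons a _)

end Colliders

section Blocking

variable {V : Type*} {E : V → V → Prop} {S Z : Set V} {t : V}

def BlockingTriple (E : V → V → Prop) (S : Set V) (x v z : V) : Prop :=
  (¬ (E x v ∧ E z v) ∧ v ∈ S) ∨ ((E x v ∧ E z v) ∧ v ∉ S ∧ ∀ d, Descendant E v d → d ∉ S)

theorem BlockingTriple.of_union_singleton {x v z : V} (h : BlockingTriple E (S ∪ {t}) x v z)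
    (hvt : v ≠ t) : BlockingTriple E S x v z := by
  rcases h with ⟨hnc, hv | hv⟩ | ⟨hc, hv, hd⟩
  · exact Or.inl ⟨hnc, hv⟩
  · exact absurd hv hvt
  · exact Or.inr ⟨hc, fun h => hv (Or.inl h), fun d hd' h => hd d hd' (Or.inl h)⟩

theorem collider_of_blockingTriple_of_not_union {x v z : V} (h : BlockingTriple E Z x v z)
    (h' : ¬ BlockingTriple E (Z ∪ {t}) x v z) (hvt : v ≠ t) :
    (E x v ∧ E z v) ∧ (∀ d, ReflTransGen E v d → d ∉ Z) ∧ TransGen E v t := by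
  rcases h with ⟨hnc, hv⟩ | ⟨hc, hv, hd⟩
  · exact absurd (Or.inl ⟨hnc, Or.inl hv⟩) h'
  refine ⟨hc, fun d hvd => ?_, ?_⟩
  · rcases reflTransGen_iff_eq_or_transGen.1 hvd with rfl | hvd
    · exact hv
    · exact hd d hvd
  · by_contra hvt'
    refine h' (Or.inr ⟨hc, ?_, fun d hvd => ?_⟩)
    · rintro (h | h)
      exacts [hv h, hvt h]
    · rintro (h | rfl)
      exacts [hd d hvd h, hvt' hvd]

theorem not_blockingTriple_of_rel (hE : Acyclic E) {x v z : V} (hvx : E v x) (hv : v ∉ S) :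
    ¬ BlockingTriple E S x v z := by
  rintro (⟨-, hv'⟩ | ⟨⟨hxv, -⟩, -⟩)
  · exact hv hv'
  · exact hE v (.tail (.single hvx) hxv)

end Blocking

namespace GPath

section Constructions

variable {V W : Type*} {E : V → V → Prop} {a b : V}

theorem exists_nodes_eq_cons (p : GPath E a b) : ∃ l, p.nodes = a :: l := by
  have h := p.head_eq
  rcases hp : p.nodes with _ | ⟨c, l⟩
  · simp [hp] at h
  · simp_all

theorem exists_eq_append_of_mem (p : GPath E a b) {u : V} (hu : u ∈ p.nodes) (hua : u ≠ a)
    (hub : u ≠ b) : ∃ s x z r, p.nodes = s ++ x :: u :: z :: r := by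
  obtain ⟨s, r, hsr⟩ := append_of_mem hu
  obtain ⟨s, x, rfl⟩ : ∃ s' x, s = s' ++ [x] := by
    simp_rw [← concat_eq_append]
    refine (eq_nil_or_concat s).resolve_left ?_
    rintro rfl
    have := p.head_eq
    simp_all
  obtain ⟨z, r, rfl⟩ : ∃ z r', r = z :: r' := by
    refine exists_cons_of_ne_nil ?_
    rintro rfl
    have := p.last_eq
    simp_all
  exact ⟨s, x, z, r, by simp [hsr]⟩

def cons (p : GPath E b a) (u : V) (hub : Adj E u b) (hu : u ∉ p.nodes) : GPath E u a where
  nodes := u :: p.nodes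
  nodup := nodup_cons.2 ⟨hu, p.nodup⟩
  two_le := by
    have := p.two_le
    simp only [length_cons]
    omega
  head_eq := rfl
  last_eq := by rw [getLast?_cons, p.last_eq]; rfl
  chain := isChain_cons.2 ⟨by simp [p.head_eq, hub], p.chain⟩

@[simp]
theorem nodes_cons (p : GPath E b a) (u : V) (hub : Adj E u b) (hu : u ∉ p.nodes) :
    (p.cons u hub hu).nodes = u :: p.nodes :=
  rfl

theorem intoFirst_cons (p : GPath E b a) {u : V} (hub : Adj E u b) (hu : u ∉ p.nodes)
    (hbu : E b u) : (p.cons u hub hu).IntoFirst := by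
  refine ⟨b, ?_, hbu⟩
  rw [nodes_cons, getElem?_cons_succ, ← head?_eq_getElem?, p.head_eq]

def ofSuffix (p : GPath E a b) {u : V} {l : List V} (h : u :: l <:+ p.nodes) (hub : u ≠ b) :
    GPath E u b where
  nodes := u :: l
  nodup := p.nodup.sublist h.sublist
  two_le := by
    rcases l with _ | ⟨c, l⟩
    · exact absurd (Option.some_injective _
        ((singleton_suffix_iff_getLast?_eq_some.1 h).symm.trans p.last_eq)) hub
    · simp
  head_eq := rfl
  last_eq := by
    obtain ⟨s, hs⟩ := h
    rw [← p.last_eq, ← hs, getLast?_append, getLast?_cons]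
    rfl
  chain := p.chain.suffix h

def map {F : W → W → Prop} (f : V → W) (hf : Function.Injective f)
    (hE : ∀ u v, E u v → F (f u) (f v)) (p : GPath E a b) : GPath F (f a) (f b) where
  nodes := p.nodes.map f
  nodup := p.nodup.map hf
  two_le := by simpa using p.two_le
  head_eq := by simp [p.head_eq]
  last_eq := by simp [p.last_eq]
  chain := (isChain_map f).2 (p.chain.imp fun u v h => h.imp (hE u v) (hE v u))

end Constructions

section Blocking

variable {V : Type*} {E : V → V → Prop} {S : Set V} {a b c d : V}

theorem blockedBy_iff (p : GPath E a b) :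
    p.BlockedBy S ↔ HasTriple (BlockingTriple E S) p.nodes := by
  have hcol : ∀ i x v z, p.nodes[i - 1]? = some x → p.nodes[i]? = some v →
      p.nodes[i + 1]? = some z → (p.ColliderAt i ↔ E x v ∧ E z v) := by
    intro i x v z hx hv hz
    refine ⟨?_, fun h => ⟨x, v, z, hx, hv, hz, h⟩⟩
    rintro ⟨x', v', z', hx', hv', hz', h⟩
    simp_all
  constructor
  · rintro ⟨i, v, ⟨hi0, hi⟩, hv, hblock⟩
    have hx : p.nodes[i - 1]? = some p.nodes[i - 1] := getElem?_eq_getElem (by omega)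
    have hz : p.nodes[i + 1]? = some p.nodes[i + 1] := getElem?_eq_getElem hi
    refine ⟨_, v, p.nodes[i + 1], triple_infix_iff_getElem?.2 ⟨i - 1, hx, ?_, ?_⟩, ?_⟩
    · rwa [Nat.sub_add_cancel hi0]
    · rwa [show i - 1 + 2 = i + 1 by omega]
    · rwa [hcol i _ _ _ hx hv hz] at hblock
  · rintro ⟨x, v, z, hxvz, hblock⟩
    obtain ⟨i, hx, hv, hz⟩ := triple_infix_iff_getElem?.1 hxvz
    refine ⟨i + 1, v, ⟨by omega, (List.getElem?_eq_some_iff.1 hz).1⟩, hv, ?_⟩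
    rwa [hcol (i + 1) x v z (by simpa using hx) hv hz]

theorem BlockedBy.of_infix {p : GPath E a b} {q : GPath E c d} (h : q.BlockedBy S)
    (hqp : q.nodes <:+: p.nodes) : p.BlockedBy S := by
  rw [blockedBy_iff] at h ⊢
  exact h.of_infix hqp

theorem BlockedBy.of_cons {p : GPath E b a} {u : V} {hub : Adj E u b} {hu : u ∉ p.nodes}
    (h : (p.cons u hub hu).BlockedBy S) (hb : ∀ z ∈ p.nodes[1]?, ¬ BlockingTriple E S u b z) :
    p.BlockedBy S := by
  obtain ⟨l, hl⟩ := p.exists_nodes_eq_cons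
  rw [blockedBy_iff, nodes_cons, hl] at h
  rw [blockedBy_iff, hl]
  refine h.of_cons_cons fun z hz => hb z ?_
  rwa [hl, getElem?_cons_succ, ← head?_eq_getElem?]

theorem BlockedBy.of_union_start (p : GPath E a b) (h : p.BlockedBy (S ∪ {a})) :
    p.BlockedBy S := by
  obtain ⟨l, hl⟩ := p.exists_nodes_eq_cons
  rw [blockedBy_iff, hl] at h ⊢
  exact h.mono fun x v z hxvz hS =>
    hS.of_union_singleton (ne_head_of_triple_infix hxvz (hl ▸ p.nodup))

end Blocking

end GPath

section ParentPaths

variable {V : Type*} {E : V → V → Prop} {t y : V} {Z : Set V}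

/-- Walks back from `w` along a directed path `w → ⋯ → c → t` before following `q`: the added nodes
are not colliders, and not blocking either as long as they avoid `S`. -/
theorem exists_path_from_parent (hE : Acyclic E) {S : Set V} {w : V} (hwt : TransGen E w t)
    (q : GPath E w y) (hq : ∀ u ∈ q.nodes, u ≠ w → ¬ (ReflTransGen E w u ∧ TransGen E u t))
    (hS : ∀ u, ReflTransGen E w u → TransGen E u t → u ∉ S) :
    ∃ c, ∃ p : GPath E c y, E c t ∧ ReflTransGen E w c ∧
      colliderCount E p.nodes = colliderCount E q.nodes ∧ (p.BlockedBy S → q.BlockedBy S) := by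
  induction hwt using TransGen.head_induction_on with
  | single hwt => exact ⟨_, q, hwt, .refl, rfl, id⟩
  | @head w u hwu hut ih =>
    have hwu' : ReflTransGen E w u := .single hwu
    have hu : u ∉ q.nodes := fun hu =>
      hq u hu (by rintro rfl; exact hE u (.single hwu)) ⟨hwu', hut⟩
    obtain ⟨c, p, hct, huc, hcount, hblock⟩ := ih (q.cons u (Or.inr hwu) hu)
      (by
        rintro u' (_ | ⟨_, hu'⟩) hu'u ⟨huu', hu't⟩
        · exact hu'u rfl
        · rcases eq_or_ne u' w with rfl | hu'w
          · exact hE u' (.head' hwu huu')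
          · exact hq u' hu' hu'w ⟨hwu'.trans huu', hu't⟩)
      (fun u' huu' => hS u' (hwu'.trans huu'))
    obtain ⟨l, hl⟩ := q.exists_nodes_eq_cons
    refine ⟨c, p, hct, hwu'.trans huc, ?_, fun hp => ?_⟩
    · rw [hcount]
      show colliderCount E (u :: q.nodes) = _
      rw [hl, colliderCount_cons_cons_of_not_rel fun h => hE w (.tail (.single hwu) h)]
    · exact (hblock hp).of_cons fun z _ =>
        not_blockingTriple_of_rel hE hwu (hS w .refl (.head hwu hut))

theorem exists_collider_of_not_blockedBy (hE : Acyclic E) (hty : t ≠ y)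
    (hback : ∀ p : GPath E t y, p.IntoFirst → p.BlockedBy Z) {c : V} (p : GPath E c y)
    (hct : E c t) (hcZ : c ∉ Z) (hp : ¬ p.BlockedBy (Z ∪ {t})) :
    ∃ x v z, [x, v, z] <:+: p.nodes ∧ (E x v ∧ E z v) ∧
      (∀ d, ReflTransGen E v d → d ∉ Z) ∧ TransGen E v t := by
  rw [GPath.blockedBy_iff] at hp
  suffices h : ∃ q : GPath E t y, q.IntoFirst ∧ (q.BlockedBy Z →
      HasTriple (fun x v z => BlockingTriple E Z x v z ∧ v ≠ t) p.nodes) by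
    obtain ⟨q, hq, hqp⟩ := h
    obtain ⟨x, v, z, hxvz, hZ, hvt⟩ := hqp (hback q hq)
    exact ⟨x, v, z, hxvz, collider_of_blockingTriple_of_not_union hZ
      (fun h => hp ⟨x, v, z, hxvz, h⟩) hvt⟩
  by_cases htp : t ∈ p.nodes
  · have hct' : t ≠ c := by rintro rfl; exact hE t (.single hct)
    obtain ⟨s, x, z, r, hs⟩ := p.exists_eq_append_of_mem htp hct' hty
    have hsuf : t :: z :: r <:+ p.nodes := ⟨s ++ [x], by simp [hs]⟩
    have hzt : E z t := by
      by_contra hzt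
      exact hp ⟨x, t, z, ⟨s, r, by simp [hs]⟩, Or.inl ⟨fun h => hzt h.2, Or.inr rfl⟩⟩
    refine ⟨p.ofSuffix hsuf hty, ⟨z, rfl, hzt⟩, fun h => ?_⟩
    rw [GPath.blockedBy_iff] at h
    refine (h.mono fun x v z hxvz hZ => ⟨hZ, ?_⟩).of_infix hsuf.isInfix
    exact ne_head_of_triple_infix hxvz (p.ofSuffix hsuf hty).nodup
  · refine ⟨p.cons t (Or.inr hct) htp, p.intoFirst_cons _ _ hct, fun h => ?_⟩
    have h := (GPath.blockedBy_iff p).1 (h.of_cons fun z _ => not_blockingTriple_of_rel hE hct hcZ)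
    refine h.mono fun x v z hxvz hZ => ⟨hZ, ?_⟩
    rintro rfl
    exact htp (hxvz.subset (by simp))

theorem exists_path_fewer_colliders (hE : Acyclic E) (hty : E t y) {c : V} (p : GPath E c y)
    {x v z : V} (hxvz : [x, v, z] <:+: p.nodes) (hcol : E x v ∧ E z v)
    (hvZ : ∀ d, ReflTransGen E v d → d ∉ Z) (hvt : TransGen E v t) :
    ∃ c', ∃ p' : GPath E c' y, E c' t ∧ c' ∉ Z ∧
      colliderCount E p'.nodes < colliderCount E p.nodes ∧
      (p'.BlockedBy (Z ∪ {t}) → p.BlockedBy (Z ∪ {t})) := by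
  obtain ⟨s, r, hsr⟩ := hxvz
  obtain ⟨W₁, w, W₂, hW, ⟨hvw, hwt⟩, hW₂⟩ := exists_eq_append_cons_of_last
    (p := fun u => ReflTransGen E v u ∧ TransGen E u t) (l := v :: z :: r) ⟨v, by simp, .refl, hvt⟩
  have hsuf : w :: W₂ <:+ p.nodes := ⟨s ++ [x] ++ W₁, by simp [← hsr, hW]⟩
  have hwy : w ≠ y := by rintro rfl; exact hE w (hwt.tail hty)
  obtain ⟨c', p', hc't, hwc', hcount, hblock⟩ :=
    exists_path_from_parent (S := Z ∪ {t}) hE hwt (p.ofSuffix hsuf hwy)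
      (fun u hu huw hu' => hW₂ u ((mem_cons.1 hu).resolve_left huw) ⟨hvw.trans hu'.1, hu'.2⟩)
      (fun u hwu hut => by
        rintro (hu | rfl)
        exacts [hvZ u (hvw.trans hwu) hu, hE u hut])
  refine ⟨c', p', hc't, hvZ c' (hvw.trans hwc'), ?_, fun hp' => (hblock hp').of_infix hsuf.isInfix⟩
  calc colliderCount E p'.nodes = colliderCount E (w :: W₂) := hcount
    _ ≤ colliderCount E (v :: z :: r) := colliderCount_le_of_suffix ⟨W₁, hW.symm⟩
    _ < colliderCount E (x :: v :: z :: r) := by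
      rw [colliderCount_cons_cons_cons hcol.1 hcol.2]
      omega
    _ ≤ colliderCount E p.nodes := colliderCount_le_of_suffix ⟨s, by simp [← hsr]⟩

theorem blockedBy_union_of_backDoor (hE : Acyclic E) (hty : E t y)
    (hback : ∀ p : GPath E t y, p.IntoFirst → p.BlockedBy Z) {c : V} (p : GPath E c y)
    (hct : E c t) (hcZ : c ∉ Z) : p.BlockedBy (Z ∪ {t}) := by
  induction h : colliderCount E p.nodes using Nat.strong_induction_on generalizing c p with
  | _ n ih =>
    by_contra hp
    obtain ⟨x, v, z, hxvz, hcol, hvZ, hvt⟩ := exists_collider_of_not_blockedBy hE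
      (by rintro rfl; exact hE t (.single hty)) hback p hct hcZ hp
    obtain ⟨c', p', hc't, hc'Z, hlt, hblock⟩ :=
      exists_path_fewer_colliders hE hty p hxvz hcol hvZ hvt
    exact hp (hblock (ih _ (h ▸ hlt) p' hc't hc'Z rfl))

theorem eq_of_descendant_of_unique_child (ht : ∀ w, E t w → w = y) (hy : ∀ w, ¬ E y w) {d : V}
    (h : Descendant E t d) : d = y := by
  induction h with
  | single h => exact ht _ h
  | tail _ h ih => exact absurd (ih ▸ h) (hy _)

theorem GPath.blockedBy_of_intoFirst_mem (hE : Acyclic E) (hty : E t y) (p : GPath E t y)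
    {w : V} (hw : p.nodes[1]? = some w) (hwt : E w t) (hwZ : w ∈ Z) : p.BlockedBy Z := by
  obtain ⟨l, hl⟩ := p.exists_nodes_eq_cons
  obtain ⟨l, rfl⟩ : ∃ l', l = w :: l' := by
    rcases l with _ | ⟨w', l⟩ <;> simp_all
  obtain ⟨z, l, rfl⟩ : ∃ z l', l = z :: l' := by
    refine exists_cons_of_ne_nil ?_
    rintro rfl
    have h := p.last_eq
    rw [hl] at h
    obtain rfl : w = y := by simpa using h
    exact hE t (.tail (.single hty) hwt)
  rw [blockedBy_iff, hl]
  exact hasTriple_cons_cons_cons (Or.inl ⟨fun h => hE t (.tail (.single h.1) hwt), hwZ⟩)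

end ParentPaths

section Subsampling

variable {V : Type*} {E : V → V → Prop} {xt : V} {V0 S : Set V}

theorem transGen_subEdge_some_iff {u d : V} :
    TransGen (subEdge E xt V0) (some u) (some d) ↔ TransGen E u d := by
  refine ⟨fun h => ?_, fun h => TransGen.lift some (fun _ _ h => h) _ _ h⟩
  suffices ∀ o, TransGen (subEdge E xt V0) (some u) o → ∀ d, o = some d → TransGen E u d from
    this _ h d rfl
  intro o h
  induction h with
  | single h =>
    rintro d rfl
    exact .single h
  | @tail o₁ o₂ _ h₂ ih =>
    rintro d rfl
    cases o₁ with
    | none => exact h₂.elim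
    | some c => exact (ih c rfl).tail h₂

theorem blockingTriple_subEdge_some_iff {x v z : V} :
    BlockingTriple (subEdge E xt V0) (some '' S) (some x) (some v) (some z) ↔
      BlockingTriple E S x v z := by
  have hdesc : (∀ d, Descendant (subEdge E xt V0) (some v) d → d ∉ some '' S) ↔
      ∀ d, Descendant E v d → d ∉ S := by
    simp only [Descendant, Option.forall, transGen_subEdge_some_iff,
      (Option.some_injective V).mem_set_image]
    simp
  simp only [BlockingTriple, subEdge, (Option.some_injective V).mem_set_image, hdesc]

namespace GPath

/-- The path `e ← x_t ⋯ b` of the sub-sampled graph. -/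
def subsample {b : V} (p : GPath E xt b) (V0 : Set V) : GPath (subEdge E xt V0) none (some b) :=
  (p.map some (Option.some_injective V) fun _ _ h => h).cons none (Or.inr (Or.inl rfl))
    (by simp [map])

theorem blockedBy_subsample_iff {b : V} (p : GPath E xt b) (hxt : xt ∉ S) :
    (p.subsample V0).BlockedBy (some '' S) ↔ p.BlockedBy S := by
  have hmap : (p.map (F := subEdge E xt V0) some (Option.some_injective V) fun _ _ h => h).BlockedBy
      (some '' S) ↔ p.BlockedBy S := by
    rw [blockedBy_iff, blockedBy_iff]
    change HasTriple _ (p.nodes.map some) ↔ _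
    simp only [hasTriple_map_iff, blockingTriple_subEdge_some_iff]
  refine ⟨fun h => hmap.1 (h.of_cons fun z _ => ?_), fun h => (hmap.2 h).of_infix ?_⟩
  · rintro (⟨-, hS⟩ | ⟨⟨h, -⟩, -⟩)
    exacts [hxt ((Option.some_injective V).mem_set_image.1 hS), h]
  · exact (suffix_cons _ _).isInfix

theorem exists_eq_subsample {b : V} (q : GPath (subEdge E xt ∅) none (some b))
    (hxt : xt ≠ b) : ∃ p : GPath E xt b, q.nodes = (p.subsample ∅).nodes := by
  obtain ⟨rest, hrest⟩ := q.exists_nodes_eq_cons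
  have hnd := q.nodup
  have hchain := q.chain
  have hlast := q.last_eq
  rw [hrest] at hnd hchain hlast
  obtain ⟨L, rfl⟩ := exists_eq_map_some (nodup_cons.1 hnd).1
  obtain ⟨u, L, rfl⟩ : ∃ u L', L = u :: L' := by
    refine exists_cons_of_ne_nil ?_
    rintro rfl
    have := q.two_le
    simp [hrest] at this
  obtain rfl : xt = u := by
    rcases (isChain_cons_cons.1 hchain).1 with h | h | h
    exacts [h.elim, h.symm, h.elim]
  rw [getLast?_cons_of_ne_nil (by simp), getLast?_map] at hlast
  refine ⟨⟨xt :: L, (nodup_cons.1 hnd).2.of_map some, ?_, rfl, by simpa using hlast,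
    ((isChain_map some).1 (isChain_cons.1 hchain).2).imp fun _ _ h => h⟩, hrest⟩
  rcases L with _ | ⟨c, L⟩
  · exact absurd (by simpa using hlast) hxt
  · simp

end GPath

variable {t y : V} {Z : Set V}

theorem dsep_subsample_of_backDoor (hE : Acyclic E) (hty : E t y)
    (hback : ∀ p : GPath E t y, p.IntoFirst → p.BlockedBy Z) (hxt : E xt t) (hxtZ : xt ∉ Z) :
    DSep (subEdge E xt ∅) none (some y) (some '' (Z ∪ {t})) := by
  intro q
  have hxty : xt ≠ y := by rintro rfl; exact hE xt (.tail (.single hxt) hty)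
  have hxtS : xt ∉ Z ∪ {t} := by
    rintro (h | rfl)
    exacts [hxtZ h, hE xt (.single hxt)]
  obtain ⟨p, hp⟩ := q.exists_eq_subsample hxty
  rw [GPath.blockedBy_iff, hp, ← GPath.blockedBy_iff, p.blockedBy_subsample_iff hxtS]
  exact blockedBy_union_of_backDoor hE hty hback p hxt hxtZ

theorem GPath.blockedBy_of_dsep_subsample (hE : Acyclic E) (hty : E t y) (p : GPath E t y)
    {w : V} (hw : p.nodes[1]? = some w) (hwt : E w t) (hxt : E xt t) (hxtZ : xt ∉ Z)
    (hd : DSep (subEdge E xt V0) none (some y) (some '' (Z ∪ {t}))) : p.BlockedBy Z := by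
  have hxtS : xt ∉ Z ∪ {t} := by
    rintro (h | rfl)
    exacts [hxtZ h, hE xt (.single hxt)]
  refine BlockedBy.of_union_start p ?_
  by_cases hxtp : xt ∈ p.nodes
  · obtain ⟨s, l, hs⟩ := append_of_mem hxtp
    have hsuf : xt :: l <:+ p.nodes := ⟨s, hs.symm⟩
    have hxty : xt ≠ y := by rintro rfl; exact hE xt (.tail (.single hxt) hty)
    exact (((p.ofSuffix hsuf hxty).blockedBy_subsample_iff hxtS).1 (hd _)).of_infix
      hsuf.isInfix
  · refine (((p.cons xt (Or.inl hxt) hxtp).blockedBy_subsample_iff hxtS).1 (hd _)).of_cons ?_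
    -- `t` is a collider on `x_t → t ← w`, and it lies in the conditioning set
    intro z hz
    obtain rfl : w = z := by simpa [hw] using hz
    rintro (⟨hnc, -⟩ | ⟨-, ht, -⟩)
    exacts [hnc ⟨hxt, hwt⟩, ht (Or.inr rfl)]

end Subsampling

end CausalDAG

open CausalDAG in
theorem stmt4_general {V : Type*} (M : SemiMarkov V)
    (hA1 : Assumption1 M)
    (Z : Set V) (hZ : Z ⊆ M.Xo) :
    BackDoor M.E M.t M.y Z ↔
      ({w | M.E w M.t} ⊆ Z ∨
        ∃ xt, M.E xt M.t ∧ xt ∉ Z ∧ ∃ V0 ⊆ ({M.t} : Set V),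
          DSep (subEdge M.E xt V0) (none : Option V) (some M.y)
            (some '' (Z ∪ {M.t}))) := by
  obtain ⟨hty, ht, hy⟩ := hA1
  have hyZ : M.y ∉ Z := fun h => M.y_notin (Or.inl (hZ h))
  constructor
  · refine fun hback => or_iff_not_imp_left.2 fun hpa => ?_
    obtain ⟨xt, hxt, hxtZ⟩ := Set.not_subset.1 hpa
    exact ⟨xt, hxt, hxtZ, ∅, Set.empty_subset _,
      dsep_subsample_of_backDoor M.acyclic hty hback.2 hxt hxtZ⟩
  · refine fun h => ⟨fun z hz hd => hyZ (eq_of_descendant_of_unique_child ht hy hd ▸ hz),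
      fun p ⟨w, hw, hwt⟩ => ?_⟩
    by_cases hwZ : w ∈ Z
    · exact p.blockedBy_of_intoFirst_mem M.acyclic hty hw hwt hwZ
    obtain ⟨xt, hxt, hxtZ, V0, -, hd⟩ := h.resolve_left fun hpa => hwZ (hpa hwt)
    exact p.blockedBy_of_dsep_subsample M.acyclic hty hw hwt hxt hxtZ hd

open CausalDAG in
/-- Corollary 2: when every parent of `t` is observed, `Z ⊆ X^(o)`
satisfies the back-door criterion iff either `pa(t) ⊆ Z`, or there is a parent
`x_t ∉ Z` of `t` for which the invariance d-separation holds in the sub-sampled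
graph. -/
theorem stmt4 {V : Type*} [Finite V] (M : SemiMarkov V)
    (hA1 : Assumption1 M)
    (hpa : ∀ w, M.E w M.t → w ∈ M.Xo)
    (Z : Set V) (hZ : Z ⊆ M.Xo) :
    BackDoor M.E M.t M.y Z ↔
      ({w | M.E w M.t} ⊆ Z ∨
        ∃ xt, M.E xt M.t ∧ xt ∉ Z ∧ ∃ V0 ⊆ ({M.t} : Set V),
          DSep (subEdge M.E xt V0) (none : Option V) (some M.y)
            (some '' (Z ∪ {M.t}))) :=
  stmt4_general M hA1 Z hZ
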